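/- arXiv:2311.13514 — 5 statements merged into one kernel-verified Lean document; each statement's English description precedes it below -/
import Mathlib

section
/- Let G be a group, N and M subgroups of G with M normalizing N (mNm⁻¹ = N for all m ∈ M) and N ∩ M = {1}; set Q := NM. Let g ∈ G satisfy gNg⁻¹ ⊆ N and Q ∩ gQg⁻¹ = (gNg⁻¹)(M ∩ gMg⁻¹). Then the map Q → M obtained from the unique factorization q = n·m (n ∈ N, m ∈ M) induces a well-defined surjection of left coset spaces Q/(Q ∩ gQg⁻¹) → M/(M ∩ gMg⁻¹), and every fiber of this surjection is in bijection with N/(gNg⁻¹). In particular [Q : Q ∩ gQg⁻¹] = [M : M ∩ gMg⁻¹]·[N : gNg⁻¹] whenever these indices are finite. -/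
/-- Iwahori-decomposition coset counting: if `M` normalizes `N`, `N ∩ M = 1`, `Q = N·M`,
`g N g⁻¹ ⊆ N` and `Q ∩ gQg⁻¹ = (gNg⁻¹)·(M ∩ gMg⁻¹)`, then the factorization `q = n·m`
induces a well-defined surjection `Q/(Q ∩ gQg⁻¹) → M/(M ∩ gMg⁻¹)` whose fibers are all in
bijection with `N/(gNg⁻¹)`; in particular
`[Q : Q ∩ gQg⁻¹] = [M : M ∩ gMg⁻¹] · [N : gNg⁻¹]` when these indices are finite. -/
theorem iwahori_coset_fibration {G : Type*} [Group G] (N M Q : Subgroup G) (g : G)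
    (hNM : ∀ m ∈ M, Subgroup.map (MulAut.conj m).toMonoidHom N = N)
    (hdisj : N ⊓ M = ⊥)
    (hNQ : N ≤ Q) (hMQ : M ≤ Q)
    (hQ : ∀ q ∈ Q, ∃ n ∈ N, ∃ m ∈ M, q = n * m)
    (hgN : Subgroup.map (MulAut.conj g).toMonoidHom N ≤ N)
    (hIwahori : ∀ x : G, x ∈ Q ⊓ Subgroup.map (MulAut.conj g).toMonoidHom Q ↔
      ∃ n ∈ Subgroup.map (MulAut.conj g).toMonoidHom N,
        ∃ m ∈ M ⊓ Subgroup.map (MulAut.conj g).toMonoidHom M, x = n * m) :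
    ∃ f : Q ⧸ ((Q ⊓ Subgroup.map (MulAut.conj g).toMonoidHom Q).subgroupOf Q) →
        M ⧸ ((M ⊓ Subgroup.map (MulAut.conj g).toMonoidHom M).subgroupOf M),
      (∀ (n : N) (m : M),
        f (QuotientGroup.mk ⟨(n : G) * (m : G), Q.mul_mem (hNQ n.2) (hMQ m.2)⟩) =
          QuotientGroup.mk m) ∧
      Function.Surjective f ∧
      (∀ y, Nonempty ((f ⁻¹' {y}) ≃
        (N ⧸ ((Subgroup.map (MulAut.conj g).toMonoidHom N).subgroupOf N)))) ∧
      (((M ⊓ Subgroup.map (MulAut.conj g).toMonoidHom M).subgroupOf M).index ≠ 0 →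
        ((Subgroup.map (MulAut.conj g).toMonoidHom N).subgroupOf N).index ≠ 0 →
        ((Q ⊓ Subgroup.map (MulAut.conj g).toMonoidHom Q).subgroupOf Q).index =
          ((M ⊓ Subgroup.map (MulAut.conj g).toMonoidHom M).subgroupOf M).index *
            ((Subgroup.map (MulAut.conj g).toMonoidHom N).subgroupOf N).index) := by
  classical
  set N' := Subgroup.map (MulAut.conj g).toMonoidHom N with hN'
  set M' := M ⊓ Subgroup.map (MulAut.conj g).toMonoidHom M with hM'
  set Q' := Q ⊓ Subgroup.map (MulAut.conj g).toMonoidHom Q with hQ'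
  have hN'Q' : N' ≤ Q' := le_inf (hgN.trans hNQ) (Subgroup.map_mono hNQ)
  have hM'Q' : M' ≤ Q' := inf_le_inf hMQ (Subgroup.map_mono hMQ)
  have conjN : ∀ m ∈ M, ∀ x ∈ N, m * x * m⁻¹ ∈ N := by
    intro m hm x hx
    have h := hNM m hm
    rw [← h]
    exact ⟨x, hx, rfl⟩
  have uniq : ∀ n₁ m₁ n₂ m₂ : G, n₁ ∈ N → m₁ ∈ M → n₂ ∈ N → m₂ ∈ M →
      n₁ * m₁ = n₂ * m₂ → n₁ = n₂ ∧ m₁ = m₂ := by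
    intro n₁ m₁ n₂ m₂ h1 h2 h3 h4 heq
    have key : n₂⁻¹ * n₁ = m₂ * m₁⁻¹ := by
      have h := congrArg (fun x => n₂⁻¹ * x * m₁⁻¹) heq
      simpa [mul_assoc] using h
    have hmem : n₂⁻¹ * n₁ ∈ N ⊓ M := Subgroup.mem_inf.mpr ⟨N.mul_mem (N.inv_mem h3) h1,
      key ▸ M.mul_mem h4 (M.inv_mem h2)⟩
    rw [hdisj, Subgroup.mem_bot] at hmem
    have hn : n₁ = n₂ := (inv_mul_eq_one.mp hmem).symm
    have hm1 : m₂ * m₁⁻¹ = 1 := by rw [← key]; exact hmem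
    exact ⟨hn, (mul_inv_eq_one.mp hm1).symm⟩
  choose nf hnf mf hmf hfac using hQ
  set P : Q → M := fun q => ⟨mf q q.2, hmf q q.2⟩ with hP
  have Pspec : ∀ (q : G) (hq : q ∈ Q) (n m : G), n ∈ N → m ∈ M → q = n * m →
      mf q hq = m := fun q hq n m hn hm h =>
    (uniq (nf q hq) (mf q hq) n m (hnf q hq) (hmf q hq) hn hm ((hfac q hq).symm.trans h)).2
  have decompQ' : ∀ x ∈ Q', ∃ ν ∈ N', ∃ μ ∈ M', x = ν * μ := fun x hx => (hIwahori x).mp hx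
  have wd : ∀ a b : Q, (QuotientGroup.leftRel (Q'.subgroupOf Q)) a b →
      (QuotientGroup.mk (P a) :
        M ⧸ (M'.subgroupOf M)) = QuotientGroup.mk (P b) := by
    intro a b hab
    rw [QuotientGroup.leftRel_apply, Subgroup.mem_subgroupOf] at hab
    have hab' : (a : G)⁻¹ * (b : G) ∈ Q' := by simpa using hab
    obtain ⟨ν, hν, μ, hμ, hx⟩ := decompQ' _ hab'
    have hb : (b : G) = (nf (a : G) a.2 * (mf (a : G) a.2 * ν * (mf (a : G) a.2)⁻¹)) *
        (mf (a : G) a.2 * μ) := by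
      have h1 : (b : G) = (a : G) * (ν * μ) := by rw [← hx]; group
      rw [h1]
      conv_lhs => rw [hfac (a : G) a.2]
      group
    have hmfb : mf (b : G) b.2 = mf (a : G) a.2 * μ :=
      Pspec (b : G) b.2 _ _ (mul_mem (hnf (a : G) a.2)
        (conjN _ (hmf (a : G) a.2) ν (hgN hν))) (mul_mem (hmf (a : G) a.2) hμ.1) hb
    rw [QuotientGroup.eq, Subgroup.mem_subgroupOf]
    show ((P a : G))⁻¹ * (P b : G) ∈ M'
    simp only [hP]
    rw [hmfb, inv_mul_cancel_left]
    exact hμ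
  set f0 : Q ⧸ (Q'.subgroupOf Q) → M ⧸ (M'.subgroupOf M) :=
    fun x => Quotient.liftOn' x (fun q => QuotientGroup.mk (P q)) wd with hf0
  have f0mk : ∀ q : Q, f0 (QuotientGroup.mk q) = QuotientGroup.mk (P q) := fun q => rfl
  have prop1 : ∀ (n : N) (m : M),
      f0 (QuotientGroup.mk ⟨(n : G) * (m : G), Q.mul_mem (hNQ n.2) (hMQ m.2)⟩) =
        QuotientGroup.mk m := by
    intro n m
    rw [f0mk]
    congr 1
    exact Subtype.ext (Pspec _ _ n m n.2 m.2 rfl)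
  -- fibers
  have hfib : ∀ y, Nonempty ((f0 ⁻¹' {y}) ≃ (N ⧸ (N'.subgroupOf N))) := by
    intro y
    obtain ⟨m₀, rfl⟩ := QuotientGroup.mk_surjective y
    have key : ∀ n : N, f0 (QuotientGroup.mk
        ⟨(m₀ : G) * n, Q.mul_mem (hMQ m₀.2) (hNQ n.2)⟩) = QuotientGroup.mk m₀ := by
      intro n
      have e : QuotientGroup.mk (⟨(m₀ : G) * n, Q.mul_mem (hMQ m₀.2) (hNQ n.2)⟩ : Q) =
          (QuotientGroup.mk ⟨((⟨(m₀ : G) * n * (m₀ : G)⁻¹, conjN _ m₀.2 _ n.2⟩ : N) : G) *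
            (m₀ : G), Q.mul_mem (hNQ (conjN _ m₀.2 _ n.2)) (hMQ m₀.2)⟩ :
            Q ⧸ (Q'.subgroupOf Q)) := by
        congr 1
        exact Subtype.ext (by group)
      rw [e]
      exact prop1 _ m₀
    set Φ0 : N → (f0 ⁻¹' {(QuotientGroup.mk m₀ : M ⧸ (M'.subgroupOf M))}) := fun n =>
      ⟨QuotientGroup.mk ⟨(m₀ : G) * n, Q.mul_mem (hMQ m₀.2) (hNQ n.2)⟩, by
        simp only [Set.mem_preimage, Set.mem_singleton_iff]; exact key n⟩ with hΦ0
    have Φwd : ∀ n₁ n₂ : N, (QuotientGroup.leftRel (N'.subgroupOf N)) n₁ n₂ →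
        Φ0 n₁ = Φ0 n₂ := by
      intro n₁ n₂ h
      rw [QuotientGroup.leftRel_apply, Subgroup.mem_subgroupOf] at h
      refine Subtype.ext ?_
      simp only [hΦ0]
      rw [QuotientGroup.eq, Subgroup.mem_subgroupOf]
      refine hN'Q' ?_
      have : ((m₀ : G) * n₁)⁻¹ * ((m₀ : G) * n₂) = (n₁ : G)⁻¹ * n₂ := by group
      show (((⟨(m₀ : G) * n₁, _⟩ : Q))⁻¹ * (⟨(m₀ : G) * n₂, _⟩ : Q) : Q).1 ∈ N'
      simp only [Subgroup.coe_mul, Subgroup.coe_inv]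
      rw [this]
      simpa using h
    set Φ : N ⧸ (N'.subgroupOf N) → (f0 ⁻¹' {(QuotientGroup.mk m₀ : M ⧸ (M'.subgroupOf M))}) :=
      fun c => Quotient.liftOn' c Φ0 Φwd with hΦ
    have Φmk : ∀ n : N, Φ (QuotientGroup.mk n) = Φ0 n := fun n => rfl
    have Φinj : Function.Injective Φ := by
      intro c₁ c₂ h
      obtain ⟨n₁, rfl⟩ := QuotientGroup.mk_surjective c₁
      obtain ⟨n₂, rfl⟩ := QuotientGroup.mk_surjective c₂
      rw [Φmk, Φmk] at h
      have h' := congrArg Subtype.val h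
      simp only [hΦ0] at h'
      rw [QuotientGroup.eq, Subgroup.mem_subgroupOf] at h' ⊢
      have h'' : ((m₀ : G) * n₁)⁻¹ * ((m₀ : G) * n₂) ∈ Q' := by simpa using h'
      have h3 : (n₁ : G)⁻¹ * n₂ ∈ Q' := by
        rwa [show ((m₀ : G) * n₁)⁻¹ * ((m₀ : G) * n₂) = (n₁ : G)⁻¹ * n₂ by group] at h''
      obtain ⟨ν, hν, μ, hμ, hx⟩ := decompQ' _ h3
      have he : (n₁ : G)⁻¹ * n₂ * 1 = ν * μ := by rw [mul_one]; exact hx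
      have hu := uniq _ 1 ν μ (mul_mem (inv_mem n₁.2) n₂.2) (one_mem M) (hgN hν) hμ.1 he
      have : (n₁ : G)⁻¹ * n₂ ∈ N' := hu.1 ▸ hν
      simpa using this
    have Φsurj : Function.Surjective Φ := by
      rintro ⟨x, hx⟩
      obtain ⟨q, rfl⟩ := QuotientGroup.mk_surjective x
      simp only [Set.mem_preimage, Set.mem_singleton_iff, f0mk] at hx
      rw [QuotientGroup.eq, Subgroup.mem_subgroupOf] at hx
      obtain ⟨y, z, hyN, hzM, hfac', hx'⟩ : ∃ y z : G, y ∈ N ∧ z ∈ M ∧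
          (q : G) = y * z ∧ z⁻¹ * (m₀ : G) ∈ M' :=
        ⟨nf (q : G) q.2, mf (q : G) q.2, hnf _ _, hmf _ _, hfac _ _, by simpa [hP] using hx⟩
      have hnmem : (m₀ : G)⁻¹ * y * (m₀ : G) ∈ N := by
        have := conjN (m₀ : G)⁻¹ (M.inv_mem m₀.2) y hyN
        simpa using this
      have hval : (QuotientGroup.mk (⟨(m₀ : G) * ((m₀ : G)⁻¹ * y * (m₀ : G)),
          Q.mul_mem (hMQ m₀.2) (hNQ hnmem)⟩ : Q) : Q ⧸ (Q'.subgroupOf Q)) =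
          QuotientGroup.mk q := by
        rw [QuotientGroup.eq, Subgroup.mem_subgroupOf]
        have e : (((⟨(m₀ : G) * ((m₀ : G)⁻¹ * y * (m₀ : G)),
            Q.mul_mem (hMQ m₀.2) (hNQ hnmem)⟩ : Q)⁻¹ * q : Q) : G) =
            (z⁻¹ * (m₀ : G))⁻¹ := by
          show ((m₀ : G) * ((m₀ : G)⁻¹ * y * (m₀ : G)))⁻¹ * (q : G) = _
          rw [hfac']
          group
        rw [e]
        exact hM'Q' (M'.inv_mem hx')
      refine ⟨QuotientGroup.mk ⟨(m₀ : G)⁻¹ * y * (m₀ : G), hnmem⟩, ?_⟩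
      rw [Φmk]
      exact Subtype.ext hval
    exact ⟨(Equiv.ofBijective Φ ⟨Φinj, Φsurj⟩).symm⟩
  refine ⟨f0, prop1, ?_, hfib, ?_⟩
  · intro y
    obtain ⟨m, rfl⟩ := QuotientGroup.mk_surjective y
    exact ⟨QuotientGroup.mk ⟨((1 : N) : G) * m, Q.mul_mem (hNQ (1 : N).2) (hMQ m.2)⟩, prop1 1 m⟩
  · intro hM hN
    have hMfin : Finite (M ⧸ (M'.subgroupOf M)) := (Nat.card_ne_zero.mp hM).2
    have hNfin : Finite (N ⧸ (N'.subgroupOf N)) := (Nat.card_ne_zero.mp hN).2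
    have hfibcard : ∀ y, Nat.card (f0 ⁻¹' {y}) = Nat.card (N ⧸ (N'.subgroupOf N)) :=
      fun y => Nat.card_congr (hfib y).some
    have hfibfin : ∀ y, Finite (f0 ⁻¹' {y}) := fun y => Finite.of_equiv _ (hfib y).some.symm
    letI : Fintype (M ⧸ (M'.subgroupOf M)) := Fintype.ofFinite _
    letI : ∀ y, Fintype (f0 ⁻¹' {y}) := fun y => Fintype.ofFinite _
    calc (Q'.subgroupOf Q).index
        = Nat.card (Q ⧸ (Q'.subgroupOf Q)) := rfl
      _ = Nat.card ((y : M ⧸ (M'.subgroupOf M)) × (f0 ⁻¹' {y})) :=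
          Nat.card_congr (Equiv.sigmaPreimageEquiv f0).symm
      _ = Fintype.card ((y : M ⧸ (M'.subgroupOf M)) × (f0 ⁻¹' {y})) :=
          Nat.card_eq_fintype_card
      _ = ∑ y : M ⧸ (M'.subgroupOf M), Fintype.card (f0 ⁻¹' {y}) := Fintype.card_sigma
      _ = ∑ _y : M ⧸ (M'.subgroupOf M), Nat.card (N ⧸ (N'.subgroupOf N)) := by
          refine Finset.sum_congr rfl fun y _ => ?_
          rw [← Nat.card_eq_fintype_card, hfibcard]
      _ = Fintype.card (M ⧸ (M'.subgroupOf M)) * Nat.card (N ⧸ (N'.subgroupOf N)) := by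
          rw [Finset.sum_const, Finset.card_univ, smul_eq_mul]
      _ = (M'.subgroupOf M).index * (N'.subgroupOf N).index := by
          rw [← Nat.card_eq_fintype_card]; rfl
end

section
/- Let O be a complete discrete valuation ring with uniformizer ϖ, M a finitely generated O-module, and f an O-linear endomorphism of M. Write M = M_ord ⊕ M_nil for the decomposition with f an automorphism of M_ord and f topologically nilpotent on M_nil. Then for every m ≥ 1, the natural map M_ord/ϖ^m M_ord → (M/ϖ^m M)_ord is an isomorphism, where (M/ϖ^m M)_ord denotes the analogous ordinary part of the induced endomorphism of M/ϖ^m M. -/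
/-!
The decomposition `M = S ⊕ T` reduces mod `ϖ^m` to a decomposition `M/ϖ^m = π S ⊕ π T` into
`g`-stable pieces on which `g` is respectively onto and nilpotent: `f^k T ⊆ ϖ T` gives
`g^(k m) (π T) ⊆ π (ϖ^m T) = 0`. Two such decompositions have the same ordinary part: for `n`
large enough that `g^n` kills both nilpotent parts, each ordinary part lies in the image of `g^n`,
and the image of `g^n` lies in the other ordinary part. The kernel statement holds for any direct
summand `S`: `S ∩ ϖ^m M = ϖ^m S`.
-/

/-- The submodule `ϖ^m · M` of a module `M` over `O`. -/
def piPowSub (O : Type*) [CommRing O] (ϖ : O) (m : ℕ) (M : Type*) [AddCommGroup M]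
    [Module O M] : Submodule O M :=
  (Ideal.span {ϖ} ^ m : Ideal O) • (⊤ : Submodule O M)

namespace Submodule

section Semiring

variable {R M N : Type*} [CommSemiring R] [AddCommMonoid M] [Module R M]
  [AddCommMonoid N] [Module R N] {φ : Module.End R M}

theorem map_pow_le_of_map_le {A : Submodule R M} (h : A.map φ ≤ A) (n : ℕ) :
    A.map (φ ^ n) ≤ A := by
  induction n with
  | zero => rw [pow_zero, Module.End.one_eq_id, map_id]
  | succ n ih => rw [pow_succ, Module.End.mul_eq_comp, map_comp]; exact (map_mono h).trans ih

theorem le_map_pow_of_le_map {A : Submodule R M} (h : A ≤ A.map φ) (n : ℕ) :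
    A ≤ A.map (φ ^ n) := by
  induction n with
  | zero => rw [pow_zero, Module.End.one_eq_id, map_id]
  | succ n ih => rw [pow_succ', Module.End.mul_eq_comp, map_comp]; exact h.trans (map_mono ih)

theorem le_map_of_surjective_restrict {A : Submodule R M} {ψ : A →ₗ[R] A}
    (hψ : ∀ x : A, (ψ x : M) = φ x) (hsurj : Function.Surjective ψ) : A ≤ A.map φ :=
  fun x hx ↦
    let ⟨y, hy⟩ := hsurj ⟨x, hx⟩
    ⟨y, y.2, by rw [← hψ, hy]⟩

theorem map_pow_mul_le_pow_smul {T : Submodule R M} {I : Ideal R} {k : ℕ}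
    (h : T.map (φ ^ k) ≤ I • T) (j : ℕ) : T.map (φ ^ (k * j)) ≤ I ^ j • T := by
  induction j with
  | zero =>
    rw [mul_zero, pow_zero, pow_zero, Module.End.one_eq_id, map_id, Ideal.one_eq_top, top_smul]
  | succ j ih =>
    rw [mul_add_one, pow_add, Module.End.mul_eq_comp, map_comp]
    calc (T.map (φ ^ k)).map (φ ^ (k * j)) ≤ (I • T).map (φ ^ (k * j)) := map_mono h
      _ = I • T.map (φ ^ (k * j)) := map_smul'' _ _ _
      _ ≤ I • I ^ j • T := smul_mono_right _ ih
      _ = I ^ (j + 1) • T := by rw [← mul_smul, ← pow_succ']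

theorem map_pow_map_of_comp_eq {π : M →ₗ[R] N} {f : Module.End R M} {g : Module.End R N}
    (h : g ∘ₗ π = π ∘ₗ f) (A : Submodule R M) (n : ℕ) :
    (A.map π).map (g ^ n) = (A.map (f ^ n)).map π := by
  rw [← map_comp, ← map_comp, Module.End.commute_pow_left_of_commute h]

theorem range_le_of_codisjoint {A B : Submodule R M} (hcod : Codisjoint A B)
    (hA : A.map φ ≤ A) (hB : B.map φ = ⊥) : LinearMap.range φ ≤ A := by
  rw [LinearMap.range_eq_map, ← hcod.eq_top, map_sup, hB, sup_bot_eq]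
  exact hA

theorem le_of_le_map_of_codisjoint {A A' B' : Submodule R M} {n : ℕ} (hA : A ≤ A.map φ)
    (hcod : Codisjoint A' B') (hA' : A'.map φ ≤ A') (hB' : B'.map (φ ^ n) = ⊥) : A ≤ A' :=
  (le_map_pow_of_le_map hA n).trans <| LinearMap.map_le_range.trans <|
    range_le_of_codisjoint hcod (map_pow_le_of_map_le hA' n) hB'

end Semiring

section Ring

variable {R M : Type*} [CommRing R] [AddCommGroup M] [Module R M]

theorem inf_ideal_smul_top_eq_of_isCompl {S T : Submodule R M} (h : IsCompl S T) (I : Ideal R) :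
    S ⊓ I • ⊤ = I • S := by
  have hT : I • T ⊓ S = ⊥ :=
    eq_bot_iff.2 ((inf_le_inf_right S smul_le_right).trans h.symm.disjoint.le_bot)
  rw [← h.sup_eq_top, smul_sup, inf_comm, sup_inf_assoc_of_le _ smul_le_right, hT, sup_bot_eq]

theorem ideal_smul_eq_bot_of_quotient (I : Ideal R)
    (N : Submodule R (M ⧸ I • (⊤ : Submodule R M))) : I • N = ⊥ :=
  eq_bot_iff.2 <|
    calc I • N ≤ I • (⊤ : Submodule R M).map (I • (⊤ : Submodule R M)).mkQ :=
          smul_mono_right _ (by rw [map_top, range_mkQ]; exact le_top)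
      _ = ⊥ := by rw [← map_smul'', mkQ_map_self]

end Ring

end Submodule

open Submodule in
theorem ordinary_part_mod_pi_pow_general {O : Type*} [CommRing O]
    (ϖ : O) (m : ℕ)
    {M : Type*} [AddCommGroup M] [Module O M]
    (f : Module.End O M)
    (S T : Submodule O M)
    (hcompl : IsCompl S T) (hS : ∀ x ∈ S, f x ∈ S)
    (hord : ∃ g : S →ₗ[O] S, (∀ x : S, (g x : M) = f (x : M)) ∧ Function.Bijective g)
    (hnil : ∃ k : ℕ, 1 ≤ k ∧ ∀ x ∈ T, (f ^ k) x ∈ (Ideal.span {ϖ} : Ideal O) • T)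
    (g : Module.End O (M ⧸ piPowSub O ϖ m M))
    (hg : ∀ x : M, g ((piPowSub O ϖ m M).mkQ x) = (piPowSub O ϖ m M).mkQ (f x))
    (S' T' : Submodule O (M ⧸ piPowSub O ϖ m M))
    (hcompl' : IsCompl S' T') (hS' : ∀ x ∈ S', g x ∈ S')
    (hord' : ∃ h : S' →ₗ[O] S',
      (∀ x : S', (h x : M ⧸ piPowSub O ϖ m M) = g (x : M ⧸ piPowSub O ϖ m M)) ∧
        Function.Bijective h)
    (hnil' : ∃ k : ℕ, 1 ≤ k ∧ ∀ x ∈ T', (g ^ k) x ∈ (Ideal.span {ϖ} : Ideal O) • T') :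
    Submodule.map (piPowSub O ϖ m M).mkQ S = S' ∧
      S ⊓ piPowSub O ϖ m M = (Ideal.span {ϖ} ^ m : Ideal O) • S := by
  set π := (piPowSub O ϖ m M).mkQ
  obtain ⟨u, hu, hu_bij⟩ := hord
  obtain ⟨h, hh, hh_bij⟩ := hord'
  obtain ⟨k, -, hk⟩ := hnil
  obtain ⟨k', -, hk'⟩ := hnil'
  have hgf : g ∘ₗ π = π ∘ₗ f := LinearMap.ext hg
  have hgS : (S.map π).map g = (S.map f).map π := by rw [← map_comp, hgf, map_comp]
  have hT_nil : (T.map π).map (g ^ (k * m)) = ⊥ := by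
    rw [map_pow_map_of_comp_eq hgf, eq_bot_iff, ← mkQ_map_self (piPowSub O ϖ m M)]
    exact map_mono <| (map_pow_mul_le_pow_smul (map_le_iff_le_comap.2 hk) m).trans
      (smul_mono_right _ le_top)
  have hT'_nil : T'.map (g ^ (k' * m)) = ⊥ := eq_bot_iff.2 <|
    (map_pow_mul_le_pow_smul (map_le_iff_le_comap.2 hk') m).trans
      (ideal_smul_eq_bot_of_quotient _ T').le
  refine ⟨le_antisymm ?_ ?_, inf_ideal_smul_top_eq_of_isCompl hcompl _⟩
  · refine le_of_le_map_of_codisjoint ?_ hcompl'.codisjoint (map_le_iff_le_comap.2 hS') hT'_nil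
    exact hgS ▸ map_mono (le_map_of_surjective_restrict hu hu_bij.2)
  · refine le_of_le_map_of_codisjoint (le_map_of_surjective_restrict hh hh_bij.2)
      (codisjoint_map (mkQ_surjective _) hcompl.codisjoint) ?_ hT_nil
    exact hgS ▸ map_mono (map_le_iff_le_comap.2 hS)

/-- Over a complete discrete valuation ring `O` with uniformizer `ϖ`, the ordinary-part
decomposition of a finitely generated module commutes with reduction mod `ϖ^m`: the image
of `M_ord` in `M/ϖ^m M` equals `(M/ϖ^m M)_ord`, and the kernel of `M_ord → M/ϖ^m M` is
`ϖ^m · M_ord`, i.e. `M_ord/ϖ^m M_ord → (M/ϖ^m M)_ord` is an isomorphism. -/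
theorem ordinary_part_mod_pi_pow {O : Type*} [CommRing O] [IsDomain O]
    [IsDiscreteValuationRing O] [IsAdicComplete (IsLocalRing.maximalIdeal O) O]
    (ϖ : O) (hϖ : Irreducible ϖ) (m : ℕ) (hm : 1 ≤ m)
    {M : Type*} [AddCommGroup M] [Module O M] [Module.Finite O M]
    (f : Module.End O M)
    (S T : Submodule O M)
    (hcompl : IsCompl S T) (hS : ∀ x ∈ S, f x ∈ S) (hT : ∀ x ∈ T, f x ∈ T)
    (hord : ∃ g : S →ₗ[O] S, (∀ x : S, (g x : M) = f (x : M)) ∧ Function.Bijective g)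
    (hnil : ∃ k : ℕ, 1 ≤ k ∧ ∀ x ∈ T, (f ^ k) x ∈ (Ideal.span {ϖ} : Ideal O) • T)
    (g : Module.End O (M ⧸ piPowSub O ϖ m M))
    (hg : ∀ x : M, g ((piPowSub O ϖ m M).mkQ x) = (piPowSub O ϖ m M).mkQ (f x))
    (S' T' : Submodule O (M ⧸ piPowSub O ϖ m M))
    (hcompl' : IsCompl S' T') (hS' : ∀ x ∈ S', g x ∈ S') (hT' : ∀ x ∈ T', g x ∈ T')
    (hord' : ∃ h : S' →ₗ[O] S',
      (∀ x : S', (h x : M ⧸ piPowSub O ϖ m M) = g (x : M ⧸ piPowSub O ϖ m M)) ∧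
        Function.Bijective h)
    (hnil' : ∃ k : ℕ, 1 ≤ k ∧ ∀ x ∈ T', (g ^ k) x ∈ (Ideal.span {ϖ} : Ideal O) • T') :
    Submodule.map (piPowSub O ϖ m M).mkQ S = S' ∧
      S ⊓ piPowSub O ϖ m M = (Ideal.span {ϖ} ^ m : Ideal O) • S :=
  ordinary_part_mod_pi_pow_general ϖ m f S T hcompl hS hord hnil g hg S' T' hcompl' hS' hord' hnil'
end

section
/- Fix two compositions of n with associated Young subgroups W_{Q'}, W_Q ≤ S_n and block partitions {B'_a} and {B_b} of {1,…,n}. Let w ∈ S_n be the minimal-length representative of the double coset W_{Q'} w W_Q, and assume w ≠ 1. Then there exist indices i < j with i and j lying in different Q-blocks, such that w(i) > w(j) and w(i), w(j) lie in different Q'-blocks. -/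
/-!
If positions `i < j` in one `Q`-block were inverted by `w`, some adjacent pair `k ⋖ k'` between
them would be inverted too; it lies in the same block, so `w * (k k')` lies in the same double
coset with one inversion fewer, contradicting minimality. Applied to `w⁻¹`, which is minimal in
`W_Q w⁻¹ W_{Q'}`, the same argument shows that no inversion of `w` has both values in one
`Q'`-block. Hence any inversion of `w ≠ 1` will do.
-/

/-- The length of a permutation of `Fin n`: the number of inversions. -/
def invLength {n : ℕ} (w : Equiv.Perm (Fin n)) : ℕ :=
  (Finset.univ.filter (fun p : Fin n × Fin n => p.1 < p.2 ∧ w p.2 < w p.1)).card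

open Equiv

theorem Equiv.swap_lt_swap_of_covBy {α : Type*} [LinearOrder α] {k k' x y : α} (hk : k ⋖ k')
    (hxy : x < y) (hne : ¬(x = k ∧ y = k')) : swap k k' x < swap k k' y := by
  have hgap (z : α) : z ≤ k ∨ k' ≤ z := (le_or_gt z k).imp_right hk.ge_of_gt
  have := hk.lt
  simp only [swap_apply_def]
  rcases hgap x with hx | hx <;> rcases hgap y with hy | hy <;> split_ifs <;> subst_vars <;>
    first | order | simp at hne

theorem Equiv.Perm.exists_inversion_of_ne_one {α : Type*} [LinearOrder α] [Finite α]
    {w : Perm α} (hw : w ≠ 1) : ∃ i j, i < j ∧ w j < w i := by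
  by_contra! h
  have hmono : StrictMono w := fun i j hij => (h i j hij).lt_of_ne (w.injective.ne hij.ne)
  exact hw (Equiv.ext (congrFun hmono.eq_id))

theorem exists_covBy_descent {α β : Type*} [PartialOrder α] [SuccOrder α] [IsSuccArchimedean α]
    [LinearOrder β] {f : α → β} {i j : α} (hij : i ≤ j) (h : f j < f i) :
    ∃ k k', k ⋖ k' ∧ i ≤ k ∧ k' ≤ j ∧ f k' < f k := by
  by_contra! hasc
  have hmono : MonotoneOn f (Set.Icc i j) := monotoneOn_of_le_succ Set.ordConnected_Icc
    fun a ha hai hsa => hasc a _ (Order.covBy_succ_of_not_isMax ha) hai.1 hsa.2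
  exact (hmono ⟨le_rfl, hij⟩ ⟨hij, le_rfl⟩ hij).not_gt h

theorem invLength_inv {n : ℕ} (w : Perm (Fin n)) : invLength w⁻¹ = invLength w := by
  unfold invLength
  refine Finset.card_nbij' (fun p => (w⁻¹ p.2, w⁻¹ p.1)) (fun p => (w p.2, w p.1)) ?_ ?_ ?_ ?_
  all_goals intro p hp; simp_all

theorem invLength_mul_swap_lt {n : ℕ} (w : Perm (Fin n)) {k k' : Fin n} (hk : k ⋖ k')
    (hd : w k' < w k) : invLength (w * swap k k') < invLength w := by
  unfold invLength
  set s := swap k k'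
  have hkk' :
      (k, k') ∈ Finset.univ.filter (fun p : Fin n × Fin n => p.1 < p.2 ∧ w p.2 < w p.1) := by
    simp [hk.lt, hd]
  refine lt_of_le_of_lt (Finset.card_le_card_of_injOn (s.prodCongr s) ?_
    (s.prodCongr s).injective.injOn) (Finset.card_erase_lt_of_mem hkk')
  rintro ⟨x, y⟩ hp
  obtain ⟨-, hxy, hwxy⟩ := Finset.mem_filter.1 (Finset.mem_coe.1 hp)
  have hne : ¬(x = k ∧ y = k') := by
    rintro ⟨rfl, rfl⟩
    exact hd.not_gt (by simpa [s] using hwxy)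
  have hsxy : s x < s y := swap_lt_swap_of_covBy hk hxy hne
  refine Finset.mem_erase.2 ⟨fun hk' => ?_, by simpa using ⟨hsxy, hwxy⟩⟩
  have hxk' : x = k' := by simpa [s, swap_apply_eq_iff] using congrArg Prod.fst hk'
  have hyk : y = k := by simpa [s, swap_apply_eq_iff] using congrArg Prod.snd hk'
  subst hxk' hyk
  exact hxy.not_gt hk.lt

theorem apply_lt_apply_of_minimal {n : ℕ} {β : Type*} [PartialOrder β] {b : Fin n → β}
    (hb : Monotone b) {w : Perm (Fin n)}
    (hmin : ∀ τ : Perm (Fin n), (∀ i, b (τ i) = b i) → invLength w ≤ invLength (w * τ))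
    {i j : Fin n} (hij : i < j) (hbij : b i = b j) : w i < w j := by
  by_contra! hji
  obtain ⟨k, k', hk, hik, hk'j, hd⟩ :=
    exists_covBy_descent hij.le (hji.lt_of_ne (w.injective.ne hij.ne'))
  have hbk : b k = b k' := le_antisymm (hb hk.le) (((hb hk'j).trans_eq hbij.symm).trans (hb hik))
  exact (hmin _ (apply_swap_eq_self hbk)).not_gt (invLength_mul_swap_lt w hk hd)

/-- (Abe–Henniart–Vignéras, Lemma 5.13.) Let `b` and `b'` be the (monotone) block maps of two
compositions of `n`, with Young subgroups `W_Q = {τ : b ∘ τ = b}` and `W_{Q'} = {σ : b' ∘ σ = b'}`.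
If `w ≠ 1` is the minimal-length representative of the double coset `W_{Q'}·w·W_Q`, then there
exist `i < j` in different `Q`-blocks with `w i > w j` and `w i`, `w j` in different
`Q'`-blocks; i.e. `w` sends some root of `Σ_N` into `−Σ_{N'}`. -/
theorem nontrivial_min_double_coset_rep_sends_root {n t t' : ℕ}
    (b : Fin n → Fin t) (b' : Fin n → Fin t')
    (hb : Monotone b) (hb' : Monotone b') (w : Equiv.Perm (Fin n)) (hw : w ≠ 1)
    (hmin : ∀ σ τ : Equiv.Perm (Fin n), (∀ i, b' (σ i) = b' i) → (∀ i, b (τ i) = b i) →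
      invLength w ≤ invLength (σ * w * τ)) :
    ∃ i j : Fin n, i < j ∧ b i ≠ b j ∧ w j < w i ∧ b' (w i) ≠ b' (w j) := by
  have hmin_right (τ : Perm (Fin n)) (hτ : ∀ i, b (τ i) = b i) :
      invLength w ≤ invLength (w * τ) := by
    simpa using hmin 1 τ (fun _ => rfl) hτ
  have hmin_inv (σ : Perm (Fin n)) (hσ : ∀ i, b' (σ i) = b' i) :
      invLength w⁻¹ ≤ invLength (w⁻¹ * σ) := by
    have hσ' (i : Fin n) : b' (σ⁻¹ i) = b' i := by simpa using (hσ (σ⁻¹ i)).symm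
    simpa [← invLength_inv (w⁻¹ * σ), invLength_inv] using hmin σ⁻¹ 1 hσ' (fun _ => rfl)
  obtain ⟨i, j, hij, hwji⟩ := w.exists_inversion_of_ne_one hw
  refine ⟨i, j, hij, fun hbij => ?_, hwji, fun hbij => ?_⟩
  · exact hwji.not_gt (apply_lt_apply_of_minimal hb hmin_right hij hbij)
  · simpa [hij.not_gt] using apply_lt_apply_of_minimal hb' hmin_inv hwji hbij.symm
end

section
/- Let E be a field complete with respect to a discrete valuation v (e.g. a finite extension of ℚ_p), V a finite-dimensional E-vector space, and f ∈ End_E(V). Then there is a unique f-stable decomposition V = V₀ ⊕ V₊ such that every eigenvalue of f on V₀ (in a fixed algebraic closure of E, with the unique extension of v) has valuation 0, and no eigenvalue of f on V₊ has valuation 0. Both summands are given by V₀ = ker(P₀(f)) and V₊ = ker(P₊(f)) where charpoly(f) = P₀ · P₊ is the factorization in E[X] grouping the roots of valuation 0 into P₀; in particular f restricts to an automorphism of V₀ with 'unit' eigenvalues. -/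
/-!
All roots of an irreducible `q ∈ E[X]` have the same `w`-valuation. For nontrivial `v` this
is because an absolute value on an algebraic extension of the complete field `E` that extends
`|·|_v` is the spectral norm, which only depends on the minimal polynomial; for trivial `v`,
every nonzero algebraic element and its inverse are integral over the valuation ring of `w`.
Grouping the irreducible factors of `charpoly f` accordingly gives `charpoly f = P₀ * P₊`
with `P₀`, `P₊` coprime (they split in `F` and share no root), so
`V = ker P₀(f) ⊕ ker P₊(f)`. For another decomposition `V₀' ⊕ V₊'`, the characteristic
polynomial of `f` on `V₀'` is coprime to `P₊`, so Cayley–Hamilton puts `V₀'` inside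
`ker P₀(f)`; likewise `V₊' ⊆ ker P₊(f)`, and in a modular lattice two complementary pairs
nested in this way coincide.
-/

open Polynomial
open scoped NNReal WithZero

namespace Module.End

section CommRing

variable {R M : Type*} [CommRing R] [AddCommGroup M] [Module R M]

theorem aeval_restrict_apply (f : End R M) {p : Submodule R M} (hp : ∀ x ∈ p, f x ∈ p)
    (q : R[X]) (x : p) : (aeval (f.restrict hp) q x : M) = aeval f q x := by
  simp only [aeval_endomorphism, Polynomial.sum, Submodule.coe_sum, Submodule.coe_smul]
  exact Finset.sum_congr rfl fun n _ => by rw [pow_restrict]; rfl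

theorem mapsTo_ker_aeval (f : End R M) (P : R[X]) :
    ∀ x ∈ LinearMap.ker (aeval f P), f x ∈ LinearMap.ker (aeval f P) := by
  intro x hx
  have hc : Commute (aeval f P) f := by simpa using (Commute.all P X).map (aeval f)
  rw [LinearMap.mem_ker] at hx ⊢
  rw [← mul_apply, hc.eq, mul_apply, hx, map_zero]

theorem aeval_restrict_ker_aeval (f : End R M) (P : R[X]) :
    aeval (f.restrict (mapsTo_ker_aeval f P)) P = 0 := by
  ext x
  simp [aeval_restrict_apply]

theorem isCompl_ker_aeval_of_isCoprime (f : End R M) {P Q : R[X]} (hPQ : IsCoprime P Q)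
    (h : aeval f (P * Q) = 0) :
    IsCompl (LinearMap.ker (aeval f P)) (LinearMap.ker (aeval f Q)) :=
  ⟨disjoint_ker_aeval_of_isCoprime f hPQ, codisjoint_iff.mpr <| by
    rw [sup_ker_aeval_eq_ker_aeval_mul_of_coprime f hPQ, h, LinearMap.ker_zero]⟩

theorem ker_aeval_le_ker_aeval_of_isCoprime (f : End R M) {P Q S : R[X]}
    (hQS : IsCoprime Q S) (h : aeval f (P * Q) = 0) :
    LinearMap.ker (aeval f S) ≤ LinearMap.ker (aeval f P) := by
  intro x hx
  rw [LinearMap.mem_ker] at hx ⊢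
  have hQ : aeval f P x ∈ LinearMap.ker (aeval f Q) := by
    rw [LinearMap.mem_ker, ← mul_apply, ← map_mul, mul_comm, h, LinearMap.zero_apply]
  have hS : aeval f P x ∈ LinearMap.ker (aeval f S) := by
    rw [LinearMap.mem_ker, ← mul_apply, ← map_mul, mul_comm, map_mul, mul_apply, hx, map_zero]
  exact Submodule.disjoint_def.mp (disjoint_ker_aeval_of_isCoprime f hQS) _ hQ hS

end CommRing

section Field

variable {K V : Type*} [Field K] [AddCommGroup V] [Module K V] [FiniteDimensional K V]

theorem le_ker_aeval_charpoly_restrict (f : End K V) {W : Submodule K V}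
    (hW : ∀ x ∈ W, f x ∈ W) : W ≤ LinearMap.ker (aeval f (f.restrict hW).charpoly) := by
  intro x hx
  rw [LinearMap.mem_ker, ← aeval_restrict_apply f hW _ ⟨x, hx⟩, LinearMap.aeval_self_charpoly]
  rfl

theorem le_ker_aeval_of_isCoprime_charpoly_restrict (f : End K V) {W : Submodule K V}
    (hW : ∀ x ∈ W, f x ∈ W) {P Q : K[X]} (h : aeval f (P * Q) = 0)
    (hco : IsCoprime Q (f.restrict hW).charpoly) : W ≤ LinearMap.ker (aeval f P) :=
  (le_ker_aeval_charpoly_restrict f hW).trans (ker_aeval_le_ker_aeval_of_isCoprime f hco h)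

theorem isRoot_map_of_isRoot_charpoly_map {L : Type*} [Field L] [Algebra K L] (f : End K V)
    {P : K[X]} (hP : aeval f P = 0) {μ : L}
    (hμ : (f.charpoly.map (algebraMap K L)).IsRoot μ) : (P.map (algebraMap K L)).IsRoot μ := by
  rw [← LinearMap.charpoly_baseChange, ← hasEigenvalue_iff_isRoot_charpoly] at hμ
  obtain ⟨x, hx⟩ := hμ.exists_hasEigenvector
  have hPL : aeval (f.baseChange L) (P.map (algebraMap K L)) = 0 := by
    rw [aeval_map_algebraMap]
    exact (aeval_algHom_apply (baseChangeHom K L V) f P).trans (by rw [hP, map_zero])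
  have := aeval_apply_of_hasEigenvector (p := P.map (algebraMap K L)) hx
  rw [hPL, LinearMap.zero_apply, eq_comm, smul_eq_zero] at this
  exact this.resolve_right hx.2

theorem isRoot_map_of_isRoot_charpoly_restrict_ker {L : Type*} [Field L] [Algebra K L]
    (f : End K V) (P : K[X]) {μ : L}
    (hμ : ((f.restrict (mapsTo_ker_aeval f P)).charpoly.map (algebraMap K L)).IsRoot μ) :
    (P.map (algebraMap K L)).IsRoot μ :=
  isRoot_map_of_isRoot_charpoly_map _ (aeval_restrict_ker_aeval f P) hμ

theorem eq_ker_aeval_of_isCompl (f : End K V) {P₀ P₁ : K[X]} (h : aeval f (P₀ * P₁) = 0)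
    (hP : Disjoint (LinearMap.ker (aeval f P₀)) (LinearMap.ker (aeval f P₁)))
    {W₀ W₁ : Submodule K V} (hW₀ : ∀ x ∈ W₀, f x ∈ W₀) (hW₁ : ∀ x ∈ W₁, f x ∈ W₁)
    (hW : IsCompl W₀ W₁) (hco₀ : IsCoprime P₁ (f.restrict hW₀).charpoly)
    (hco₁ : IsCoprime P₀ (f.restrict hW₁).charpoly) :
    W₀ = LinearMap.ker (aeval f P₀) ∧ W₁ = LinearMap.ker (aeval f P₁) := by
  have hle₀ := le_ker_aeval_of_isCoprime_charpoly_restrict f hW₀ h hco₀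
  have hle₁ := le_ker_aeval_of_isCoprime_charpoly_restrict f hW₁ (mul_comm P₀ P₁ ▸ h) hco₁
  exact ⟨(le_iff_eq_of_codisjoint_of_disjoint hW.codisjoint (hP.symm.mono_left hle₁)).mp
    hle₀, (le_iff_eq_of_codisjoint_of_disjoint hW.symm.codisjoint (hP.mono_left hle₀)).mp hle₁⟩

theorem bijective_of_not_isRoot_charpoly_zero (f : End K V) (h : ¬ f.charpoly.IsRoot 0) :
    Function.Bijective f := by
  have hker : LinearMap.ker f = ⊥ := by
    refine ((LinearMap.not_hasEigenvalue_zero_tfae f).out 0 4).mp ?_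
    rwa [hasEigenvalue_iff_isRoot_charpoly]
  have hinj := LinearMap.ker_eq_bot.mp hker
  exact ⟨hinj, LinearMap.injective_iff_surjective.mp hinj⟩

end Field

end Module.End

namespace Polynomial

variable {K L : Type*} [Field K] [CommRing L] [IsDomain L] [Algebra K L]

theorem isCoprime_of_splits_of_forall_isRoot {A B : K[X]} (hA : A ≠ 0)
    (hs : (A.map (algebraMap K L)).Splits)
    (h : ∀ μ : L, (A.map (algebraMap K L)).IsRoot μ → ¬ (B.map (algebraMap K L)).IsRoot μ) :
    IsCoprime A B := by
  refine isCoprime_of_dvd A B (fun hAB => hA hAB.1) fun z hz _ hzA hzB => ?_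
  have hzs : (z.map (algebraMap K L)).Splits :=
    hs.of_dvd (Polynomial.map_ne_zero hA) (Polynomial.map_dvd _ hzA)
  obtain ⟨μ, hμ⟩ := hzs.exists_eval_eq_zero <| by
    rw [degree_map]
    exact fun h0 => hz (isUnit_iff_degree_eq_zero.mpr h0)
  exact h μ (IsRoot.dvd hμ (map_dvd _ hzA)) (IsRoot.dvd hμ (map_dvd _ hzB))

theorem exists_eq_mul_forall_isRoot (p : L → Prop)
    (hp : ∀ q : K[X], Irreducible q → ∀ α β : L, (q.map (algebraMap K L)).IsRoot α →
      (q.map (algebraMap K L)).IsRoot β → p α → p β)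
    {P : K[X]} (hP : P ≠ 0) :
    ∃ P₀ P₁ : K[X], P = P₀ * P₁ ∧ (∀ μ, (P₀.map (algebraMap K L)).IsRoot μ → p μ) ∧
      (∀ μ, (P₁.map (algebraMap K L)).IsRoot μ → ¬ p μ) := by
  induction P using WfDvdMonoid.induction_on_irreducible with
  | zero => exact absurd rfl hP
  | unit u hu =>
    refine ⟨1, u, (one_mul u).symm, by simp, fun μ hμ => absurd hμ ?_⟩
    exact ((hu.map (mapRingHom (algebraMap K L))).map (evalRingHom μ)).ne_zero
  | mul a q ha hq ih =>
    obtain ⟨P₀, P₁, rfl, h₀, h₁⟩ := ih ha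
    by_cases hqp : ∀ μ, (q.map (algebraMap K L)).IsRoot μ → p μ
    · refine ⟨q * P₀, P₁, (mul_assoc _ _ _).symm, fun μ hμ => ?_, h₁⟩
      rw [Polynomial.map_mul, root_mul] at hμ
      exact hμ.elim (hqp μ) (h₀ μ)
    · push Not at hqp
      obtain ⟨ν, hν, hνp⟩ := hqp
      refine ⟨P₀, q * P₁, by ring, h₀, fun μ hμ => ?_⟩
      rw [Polynomial.map_mul, root_mul] at hμ
      exact hμ.elim (fun hμq hμp => hνp (hp q hq μ ν hμq hν hμp)) (h₁ μ)

end Polynomial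

theorem AbsoluteValue.apply_eq_spectralValue_minpoly {K F : Type*}
    [NontriviallyNormedField K] [CompleteSpace K] [IsUltrametricDist K] [Field F] [Algebra K F]
    (f : AbsoluteValue F ℝ)
    (hf : ∀ c : K, f (algebraMap K F c) = ‖c‖) {x : F} (hx : IsIntegral K x) :
    f x = spectralValue (minpoly K x) := by
  let L := algebraicClosure K F
  have := spectralNorm_unique_field_norm_ext (f := f.comp (L.val : L →+* F).injective) hf
    ⟨x, hx⟩
  rwa [spectralNorm, IntermediateField.minpoly_eq] at this

namespace Valuation

variable {E F : Type*} [Field E] [Field F] [Algebra E F]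

theorem map_le_one_of_isIntegral {Γ₀ : Type*} [LinearOrderedCommGroupWithZero Γ₀]
    (w : Valuation F Γ₀) (hE : ∀ c : E, w (algebraMap E F c) ≤ 1) {x : F}
    (hx : IsIntegral E x) : w x ≤ 1 := by
  obtain ⟨p, hp, hpx⟩ := hx
  have hlift : p.map (algebraMap E F) ∈ lifts (algebraMap w.integer F) :=
    (lifts_iff_coeff_lifts _).mpr fun n => ⟨⟨_, hE (p.coeff n)⟩, (coeff_map _ n).symm⟩
  obtain ⟨q, hq, -, hqm⟩ := lifts_and_natDegree_eq_and_monic hlift (hp.map _)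
  refine (integer.integers w).isIntegral_iff_v_le_one.mp ⟨q, hqm, ?_⟩
  rwa [← eval_map, hq, eval_map]

theorem map_eq_one_of_isIntegral {Γ₀ : Type*} [LinearOrderedCommGroupWithZero Γ₀]
    (w : Valuation F Γ₀) (hE : ∀ c : E, c ≠ 0 → w (algebraMap E F c) = 1) {x : F}
    (hx : IsIntegral E x) (hx0 : x ≠ 0) : w x = 1 := by
  have hE' : ∀ c : E, w (algebraMap E F c) ≤ 1 := fun c => by
    rcases eq_or_ne c 0 with rfl | hc
    · simp
    · exact (hE c hc).le
  refine le_antisymm (w.map_le_one_of_isIntegral hE' hx) ?_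
  have := w.map_le_one_of_isIntegral hE' hx.inv
  rwa [map_inv₀, inv_le_one₀ (w.pos_iff.mpr hx0)] at this

noncomputable def absoluteValueOfWithZeroMulInt {e : ℝ≥0} (he : 1 < e) (w : Valuation F ℤᵐ⁰) :
    AbsoluteValue F ℝ where
  toFun x := WithZeroMulInt.toNNReal (ne_zero_of_lt he) (w x)
  map_mul' _ _ := by simp
  nonneg' _ := NNReal.coe_nonneg _
  eq_zero' _ := by simp
  add_le' x y := by
    have hmono := (WithZeroMulInt.toNNReal_strictMono he).monotone
    calc (WithZeroMulInt.toNNReal (ne_zero_of_lt he) (w (x + y)) : ℝ)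
        ≤ max (WithZeroMulInt.toNNReal (ne_zero_of_lt he) (w x) : ℝ)
          (WithZeroMulInt.toNNReal (ne_zero_of_lt he) (w y)) := by
          rw [← NNReal.coe_max, NNReal.coe_le_coe, ← hmono.map_max]
          exact hmono (w.map_add x y)
      _ ≤ _ := max_le_add_of_nonneg (NNReal.coe_nonneg _) (NNReal.coe_nonneg _)

@[reducible]
noncomputable def rankOneOfWithZeroMulInt {R : Type*} [Ring R] {e : ℝ≥0} (he : 1 < e)
    (v : Valuation R ℤᵐ⁰) [v.IsNontrivial] : v.RankOne where
  hom' := (WithZeroMulInt.toNNReal (ne_zero_of_lt he)).comp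
    MonoidWithZeroHom.ValueGroup₀.embedding
  strictMono' := (WithZeroMulInt.toNNReal_strictMono he).comp
    MonoidWithZeroHom.ValueGroup₀.embedding_strictMono

variable [Valued E ℤᵐ⁰] [CompleteSpace E]

theorem map_eq_of_minpoly_eq_of_isNontrivial [(Valued.v : Valuation E ℤᵐ⁰).IsNontrivial]
    (w : Valuation F ℤᵐ⁰) (hw : ∀ c : E, w (algebraMap E F c) = Valued.v c) {α β : F}
    (hα : IsIntegral E α) (hβ : IsIntegral E β) (h : minpoly E α = minpoly E β) :
    w α = w β := by
  let := rankOneOfWithZeroMulInt one_lt_two (Valued.v : Valuation E ℤᵐ⁰)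
  let := Valued.toNontriviallyNormedField E ℤᵐ⁰
  let f := w.absoluteValueOfWithZeroMulInt one_lt_two
  have hf (c : E) : f (algebraMap E F c) = ‖c‖ := by
    rw [Valued.toNormedField.norm_def]
    exact congrArg (fun t => (WithZeroMulInt.toNNReal two_ne_zero t : ℝ))
      ((hw c).trans (embedding_restrict _ c).symm)
  have := f.apply_eq_spectralValue_minpoly hf hα
  rw [h, ← f.apply_eq_spectralValue_minpoly hf hβ] at this
  exact (WithZeroMulInt.toNNReal_strictMono one_lt_two).injective (NNReal.coe_injective this)

theorem map_eq_of_minpoly_eq (w : Valuation F ℤᵐ⁰)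
    (hw : ∀ c : E, w (algebraMap E F c) = Valued.v c) {α β : F}
    (hα : IsIntegral E α) (hβ : IsIntegral E β) (h : minpoly E α = minpoly E β) :
    w α = w β := by
  by_cases hv : ∃ c : E, Valued.v c ≠ 0 ∧ Valued.v c ≠ 1
  · have : (Valued.v : Valuation E ℤᵐ⁰).IsNontrivial := ⟨hv⟩
    exact map_eq_of_minpoly_eq_of_isNontrivial w hw hα hβ h
  push Not at hv
  have hE : ∀ c : E, c ≠ 0 → w (algebraMap E F c) = 1 := fun c hc =>
    (hw c).trans (hv c ((Valued.v).ne_zero_iff.mpr hc))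
  have hα0 : α = 0 ↔ β = 0 := by
    rw [← minpoly.coeff_zero_eq_zero hα, ← minpoly.coeff_zero_eq_zero hβ, h]
  rcases eq_or_ne α 0 with rfl | hα₀
  · rw [hα0.mp rfl]
  · rw [w.map_eq_one_of_isIntegral hE hα hα₀,
      w.map_eq_one_of_isIntegral hE hβ (hα0.not.mp hα₀)]

theorem map_eq_of_isRoot_of_irreducible (w : Valuation F ℤᵐ⁰)
    (hw : ∀ c : E, w (algebraMap E F c) = Valued.v c) {q : E[X]} (hq : Irreducible q)
    {α β : F} (hα : (q.map (algebraMap E F)).IsRoot α)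
    (hβ : (q.map (algebraMap E F)).IsRoot β) :
    w α = w β := by
  rw [IsRoot, eval_map, ← aeval_def] at hα hβ
  exact w.map_eq_of_minpoly_eq hw (isAlgebraic_iff_isIntegral.mp ⟨q, hq.ne_zero, hα⟩)
    (isAlgebraic_iff_isIntegral.mp ⟨q, hq.ne_zero, hβ⟩)
    ((minpoly.eq_of_irreducible hq hα).symm.trans (minpoly.eq_of_irreducible hq hβ))

end Valuation

open Module.End

/-- Slope-zero (ordinary) decomposition: let `E` be a field complete with respect to a
discrete valuation (`Valued E ℤₘ₀` and complete), `V` a finite-dimensional `E`-vector space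
and `f ∈ End_E(V)`. Let `F/E` be a field extension with a valuation `w` extending that of `E`
in which `charpoly f` splits (e.g. an algebraic closure with the unique extension of the
valuation). Then there is a unique `f`-stable decomposition `V = V₀ ⊕ V₊` such that every
eigenvalue of `f` on `V₀` has valuation `0` (value `1`) and no eigenvalue of `f` on `V₊`
has valuation `0`; the summands are `V₀ = ker P₀(f)`, `V₊ = ker P₊(f)` for the factorization
`charpoly f = P₀ · P₊` grouping the valuation-zero roots into `P₀`, and `f` restricts to an
automorphism of `V₀`. -/
theorem slope_zero_decomposition {E : Type*} [Field E]
    [Valued E (WithZero (Multiplicative ℤ))] [CompleteSpace E]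
    {V : Type*} [AddCommGroup V] [Module E V] [FiniteDimensional E V]
    (f : Module.End E V)
    {F : Type*} [Field F] [Algebra E F] (w : Valuation F (WithZero (Multiplicative ℤ)))
    (hw : ∀ x : E, w (algebraMap E F x) = Valued.v x)
    (hsplit : Polynomial.Splits ((LinearMap.charpoly f).map (algebraMap E F))) :
    ∃ (V₀ Vp : Submodule E V) (h₀ : ∀ x ∈ V₀, f x ∈ V₀) (hp : ∀ x ∈ Vp, f x ∈ Vp),
      IsCompl V₀ Vp ∧
      (∀ μ : F, ((LinearMap.charpoly (f.restrict h₀)).map (algebraMap E F)).IsRoot μ →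
        w μ = 1) ∧
      (∀ μ : F, ((LinearMap.charpoly (f.restrict hp)).map (algebraMap E F)).IsRoot μ →
        w μ ≠ 1) ∧
      Function.Bijective (f.restrict h₀) ∧
      (∃ P₀ Pp : E[X], LinearMap.charpoly f = P₀ * Pp ∧
        (∀ μ : F, (P₀.map (algebraMap E F)).IsRoot μ → w μ = 1) ∧
        (∀ μ : F, (Pp.map (algebraMap E F)).IsRoot μ → w μ ≠ 1) ∧
        V₀ = LinearMap.ker (Polynomial.aeval f P₀) ∧
        Vp = LinearMap.ker (Polynomial.aeval f Pp)) ∧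
      (∀ (V₀' Vp' : Submodule E V) (h₀' : ∀ x ∈ V₀', f x ∈ V₀')
          (hp' : ∀ x ∈ Vp', f x ∈ Vp'),
        IsCompl V₀' Vp' →
        (∀ μ : F, ((LinearMap.charpoly (f.restrict h₀')).map (algebraMap E F)).IsRoot μ →
          w μ = 1) →
        (∀ μ : F, ((LinearMap.charpoly (f.restrict hp')).map (algebraMap E F)).IsRoot μ →
          w μ ≠ 1) →
        V₀' = V₀ ∧ Vp' = Vp) := by
  have hχ : f.charpoly ≠ 0 := f.charpoly_monic.ne_zero
  obtain ⟨P₀, Pp, hfac, hroot₀, hrootp⟩ := exists_eq_mul_forall_isRoot (fun μ => w μ = 1)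
    (fun q hq α β hα hβ h => (w.map_eq_of_isRoot_of_irreducible hw hq hα hβ) ▸ h) hχ
  have hCH : aeval f (P₀ * Pp) = 0 := hfac ▸ LinearMap.aeval_self_charpoly f
  have hP₀ : P₀ ≠ 0 := left_ne_zero_of_mul (hfac ▸ hχ)
  have hPp : Pp ≠ 0 := right_ne_zero_of_mul (hfac ▸ hχ)
  have hs₀ := hsplit.of_dvd (map_ne_zero hχ) (map_dvd _ (hfac ▸ dvd_mul_right P₀ Pp))
  have hsp := hsplit.of_dvd (map_ne_zero hχ) (map_dvd _ (hfac ▸ dvd_mul_left Pp P₀))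
  have hcompl := isCompl_ker_aeval_of_isCoprime f (isCoprime_of_splits_of_forall_isRoot hP₀ hs₀
    fun μ h₀ hp => hrootp μ hp (hroot₀ μ h₀)) hCH
  have hres₀ (μ : F) hμ := hroot₀ μ (isRoot_map_of_isRoot_charpoly_restrict_ker f P₀ hμ)
  refine ⟨_, _, mapsTo_ker_aeval f P₀, mapsTo_ker_aeval f Pp, hcompl, hres₀,
    fun μ hμ => hrootp μ (isRoot_map_of_isRoot_charpoly_restrict_ker f Pp hμ),
    bijective_of_not_isRoot_charpoly_zero _ fun h0 => ?_,
    ⟨P₀, Pp, hfac, hroot₀, hrootp, rfl, rfl⟩,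
    fun V₀' Vp' h₀' hp' hcompl' hres₀' hresp' =>
      eq_ker_aeval_of_isCompl f hCH hcompl.disjoint h₀' hp' hcompl'
        (isCoprime_of_splits_of_forall_isRoot hPp hsp fun μ hp h₀ => hrootp μ hp (hres₀' μ h₀))
        (isCoprime_of_splits_of_forall_isRoot hP₀ hs₀ fun μ h₀ hp => hresp' μ hp (hroot₀ μ h₀))⟩
  simpa using hres₀ 0 (by simpa using h0.map (f := algebraMap E F))
end

section
/- Let G be a group, M⁺ ⊆ G a submonoid, and z ∈ M⁺ a central element of G such that for every g ∈ G there exists an integer k ≥ 0 with z^k·g ∈ M⁺. Then G is generated as a monoid by M⁺ ∪ {z⁻¹}; more precisely, every g ∈ G can be written as g = z^{−k}·m with k ≥ 0 and m ∈ M⁺. Moreover, the multiplication map M⁺ × ⟨z⟩ → G (where ⟨z⟩ is the subgroup generated by z) is surjective, and two pairs (m₁, z^{a₁}), (m₂, z^{a₂}) have the same product if and only if they are related by the equivalence generated by (m·z, z^{a}) ∼ (m, z^{a+1}). -/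
private lemma chain_aux {G : Type*} [Group G] (M : Submonoid G) (z : G) (hzM : z ∈ M)
    (m : G) (hm : m ∈ M) (d : ℕ) (a : ℤ) :
    Relation.EqvGen
      (fun p q : M × ℤ => ((p.1 : G) = (q.1 : G) * z ∧ q.2 = p.2 + 1))
      (⟨⟨m * z ^ d, M.mul_mem hm (M.pow_mem hzM d)⟩, a⟩) (⟨⟨m, hm⟩, a + d⟩) := by
  induction d generalizing a with
  | zero =>
    have h1 : (⟨⟨m * z ^ 0, M.mul_mem hm (M.pow_mem hzM 0)⟩, a⟩ : M × ℤ)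
        = (⟨⟨m, hm⟩, a + (0:ℕ)⟩ : M × ℤ) := by
      refine Prod.ext (Subtype.ext ?_) ?_ <;> simp
    rw [h1]
    exact Relation.EqvGen.refl _
  | succ d ih =>
    have h2 : a + ((d + 1 : ℕ) : ℤ) = (a + 1) + (d : ℤ) := by push_cast; ring
    rw [h2]
    refine Relation.EqvGen.trans _ (⟨⟨m * z ^ d, M.mul_mem hm (M.pow_mem hzM d)⟩, a + 1⟩) _
      (Relation.EqvGen.rel _ _ ⟨?_, rfl⟩) (ih (a + 1))
    simp [pow_succ, mul_assoc]

private lemma fwd_aux {G : Type*} [Group G] (M : Submonoid G) (z : G) (hzM : z ∈ M)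
    (m₁ : G) (hm₁ : m₁ ∈ M) (a₁ : ℤ) (m₂ : G) (hm₂ : m₂ ∈ M) (a₂ : ℤ)
    (hle : a₁ ≤ a₂) (h : m₁ * z ^ a₁ = m₂ * z ^ a₂) :
    Relation.EqvGen
      (fun p q : M × ℤ => ((p.1 : G) = (q.1 : G) * z ∧ q.2 = p.2 + 1))
      (⟨⟨m₁, hm₁⟩, a₁⟩) (⟨⟨m₂, hm₂⟩, a₂⟩) := by
  set d : ℕ := (a₂ - a₁).toNat with hdd
  have hd : (d : ℤ) = a₂ - a₁ := Int.toNat_of_nonneg (by omega)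
  have hm : m₁ = m₂ * z ^ d := by
    have h1 : m₁ = m₂ * z ^ a₂ * (z ^ a₁)⁻¹ := by rw [← h, mul_inv_cancel_right]
    rw [h1, mul_assoc, ← zpow_neg, ← zpow_add, ← sub_eq_add_neg, ← hd, zpow_natCast]
  have h1 : (⟨⟨m₁, hm₁⟩, a₁⟩ : M × ℤ)
      = (⟨⟨m₂ * z ^ d, M.mul_mem hm₂ (M.pow_mem hzM d)⟩, a₁⟩ : M × ℤ) :=
    Prod.ext (Subtype.ext hm) rfl
  have h2 : a₂ = a₁ + (d : ℤ) := by omega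
  rw [h1, h2]
  exact chain_aux M z hzM m₂ hm₂ d a₁

/-- Structure of a group generated by a positive submonoid and a central element:
if `z ∈ M` is central in `G` and every `g ∈ G` becomes an element of `M` after multiplying
by a high power of `z`, then `G` is generated as a monoid by `M ∪ {z⁻¹}`; precisely, every
`g` is of the form `z⁻ᵏ·m` with `m ∈ M`; the multiplication map `M × ⟨z⟩ → G` is surjective;
and two pairs `(m₁, z^{a₁})`, `(m₂, z^{a₂})` have the same product iff they are related by
the equivalence generated by `(m·z, z^a) ∼ (m, z^{a+1})`. -/
theorem monoid_generation_by_positive_part {G : Type*} [Group G] (M : Submonoid G) (z : G)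
    (hzM : z ∈ M) (hcentral : ∀ g : G, z * g = g * z)
    (habs : ∀ g : G, ∃ k : ℕ, z ^ k * g ∈ M) :
    (Submonoid.closure ((M : Set G) ∪ {z⁻¹}) = ⊤) ∧
    (∀ g : G, ∃ (k : ℕ) (m : G), m ∈ M ∧ g = z⁻¹ ^ k * m) ∧
    Function.Surjective (fun p : M × Subgroup.zpowers z => ((p.1 : G) * (p.2 : G))) ∧
    (∀ p q : M × ℤ,
      ((p.1 : G) * z ^ p.2 = (q.1 : G) * z ^ q.2 ↔
        Relation.EqvGen
          (fun p q : M × ℤ => ((p.1 : G) = (q.1 : G) * z ∧ q.2 = p.2 + 1)) p q)) := by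
  have hrep : ∀ g : G, ∃ (k : ℕ) (m : G), m ∈ M ∧ g = z⁻¹ ^ k * m := by
    intro g
    obtain ⟨k, hk⟩ := habs g
    exact ⟨k, z ^ k * g, hk, by rw [inv_pow, ← mul_assoc, inv_mul_cancel, one_mul]⟩
  have hcomm : ∀ (g : G) (k : ℕ), z⁻¹ ^ k * g = g * z⁻¹ ^ k := by
    intro g k
    induction k with
    | zero => simp
    | succ n ih =>
      have hz : z⁻¹ * g = g * z⁻¹ := by
        rw [inv_mul_eq_iff_eq_mul, ← mul_assoc, hcentral, mul_assoc,
          mul_inv_cancel, mul_one]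
      rw [pow_succ, mul_assoc, hz, ← mul_assoc, ih, mul_assoc]
  refine ⟨?_, hrep, ?_, ?_⟩
  · rw [eq_top_iff]
    intro g _
    obtain ⟨k, m, hm, hg⟩ := hrep g
    rw [hg]
    have hzi : z⁻¹ ∈ Submonoid.closure ((M : Set G) ∪ {z⁻¹}) :=
      Submonoid.subset_closure (Or.inr rfl)
    have hmcl : m ∈ Submonoid.closure ((M : Set G) ∪ {z⁻¹}) :=
      Submonoid.subset_closure (Or.inl hm)
    exact mul_mem (pow_mem hzi k) hmcl
  · intro g
    obtain ⟨k, m, hm, hg⟩ := hrep g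
    refine ⟨⟨⟨m, hm⟩, ⟨z ^ (-(k:ℤ)), ⟨-(k:ℤ), rfl⟩⟩⟩, ?_⟩
    simp only
    rw [hg, hcomm, zpow_neg, zpow_natCast, inv_pow]
  · intro p q
    constructor
    · intro h
      obtain ⟨⟨m₁, hm₁⟩, a₁⟩ := p
      obtain ⟨⟨m₂, hm₂⟩, a₂⟩ := q
      rcases le_total a₁ a₂ with hle | hle
      · exact fwd_aux M z hzM m₁ hm₁ a₁ m₂ hm₂ a₂ hle h
      · exact (fwd_aux M z hzM m₂ hm₂ a₂ m₁ hm₁ a₁ hle h.symm).symm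
    · intro h
      induction h with
      | rel p q hpq =>
        obtain ⟨h1, h2⟩ := hpq
        rw [h1, h2, mul_assoc, ← zpow_one_add, add_comm]
      | refl _ => rfl
      | symm _ _ _ ih => exact ih.symm
      | trans _ _ _ _ _ ih1 ih2 => exact ih1.trans ih2
end
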